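/- Theorem 3.2 (KKT condition at a global maximizer). Let f and the partial Euclidean gradients ℋ_ℓ be as defined in the context. Suppose (P_{*1},…,P_{*m}) with each P_{*ℓ} ∈ ℂ^{n_ℓ×k_ℓ} orthonormal is a global maximizer of f over tuples of orthonormal matrices, i.e., f(P_{*1},…,P_{*m}) ≥ f(P_1,…,P_m) for all tuples with P_ℓ ∈ ℂ^{n_ℓ×k_ℓ} orthonormal. Then for every 1 ≤ ℓ ≤ m, ℋ_ℓ(P_{*1},…,P_{*m}) = P_{*ℓ}·Λ_{*ℓ} with Λ_{*ℓ} := P_{*ℓ}^H ℋ_ℓ(P_{*1},…,P_{*m}) Hermitian positive semidefinite; i.e., each ℋ_ℓ(P_{*1},…,P_{*m}) admits P_{*ℓ} as an orthonormal polar factor. -/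

import Mathlib

/-!
With all factors but `P_ℓ` fixed, `f` is a quadratic form in the columns of `P_ℓ`:
`f(P) = Σ_{s,c} p_{sc}ᴴ H_{ℓs} p_{sc}`, where `H_{ℓs} = G Gᴴ` for the mode-`ℓ` unfolding `G` of
`B_{ℓ,s}`, so `H_{ℓs}` is positive semidefinite and does not depend on `P_ℓ`. Hence, for every
orthonormal `U`,
`Re tr(Uᴴ ℋ_ℓ) = 2 Σ Re uᴴ H p ≤ f(…, U, …) + f(P_*) ≤ 2 f(P_*) = Re tr(P_{*ℓ}ᴴ ℋ_ℓ)`: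
`P_{*ℓ}` maximises the linear functional `U ↦ Re tr(Uᴴ ℋ_ℓ)` over orthonormal `U`.

If an orthonormal `Q` maximises `U ↦ Re tr(Uᴴ A)`, then `Λ = Qᴴ A` is positive semidefinite
(compare with `Q W` for the unitaries `W = 1 + (c - 1) X`, `X` an orthogonal projection, `|c| = 1`)
and `A = Q Λ` (otherwise rotate a column of `Q` slightly towards the part of `A` orthogonal to the
range of `Q`, which increases the functional to first order). -/

open Matrix Filter Topology
open scoped ComplexOrder Classical

/-- The entries of the multi-mode product `B ×₁ P₁ᴴ ×₂ ⋯ ×ₘ Pₘᴴ` of an `m`-mode tensor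
`B` of size `n 0 × ⋯ × n (m-1)` with the conjugate transposes of the matrices `P ℓ`.
The column index set of `P ℓ` is `(s : Fin t) × Fin (κ ℓ s)`, encoding the partition of
`k ℓ = Σ s, κ ℓ s` into `t` blocks (block `s` has the indices with first component `s`). -/
noncomputable def multiProd {m t : ℕ} {n : Fin m → ℕ} {κ : Fin m → Fin t → ℕ}
    (B : (∀ ℓ, Fin (n ℓ)) → ℂ)
    (P : ∀ ℓ, Matrix (Fin (n ℓ)) ((s : Fin t) × Fin (κ ℓ s)) ℂ) :
    (∀ ℓ, (s : Fin t) × Fin (κ ℓ s)) → ℂ :=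
  fun i => ∑ j : ∀ ℓ, Fin (n ℓ), (∏ ℓ, star (P ℓ (j ℓ) (i ℓ))) * B j

/-- The block-diagonal objective
`f(P₁,…,Pₘ) = ‖BDiag(B ×₁ P₁ᴴ ×₂ ⋯ ×ₘ Pₘᴴ)‖_F²`: the sum of `|T(i)|²` over all
multi-indices `i` whose components all lie in the same diagonal block. -/
noncomputable def fObj {m t : ℕ} {n : Fin m → ℕ} {κ : Fin m → Fin t → ℕ}
    (B : (∀ ℓ, Fin (n ℓ)) → ℂ)
    (P : ∀ ℓ, Matrix (Fin (n ℓ)) ((s : Fin t) × Fin (κ ℓ s)) ℂ) : ℝ :=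
  ∑ i : ∀ ℓ, (s : Fin t) × Fin (κ ℓ s),
    if ∃ s : Fin t, ∀ ℓ, (i ℓ).1 = s then Complex.normSq (multiProd B P i) else 0

/-- The tensor `B_{ℓ,s} = B ×₁ P_{1s}ᴴ ⋯ ×_{ℓ-1} P_{ℓ-1,s}ᴴ ×_{ℓ+1} P_{ℓ+1,s}ᴴ ⋯ ×ₘ P_{ms}ᴴ`
(mode products by the `s`-th column blocks over every mode except `ℓ`), evaluated at the index
whose `ℓ`-th component is `a` and whose other components are given by `ih`. -/
noncomputable def Bls {m t : ℕ} {n : Fin m → ℕ} {κ : Fin m → Fin t → ℕ}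
    (B : (∀ ℓ, Fin (n ℓ)) → ℂ)
    (P : ∀ ℓ, Matrix (Fin (n ℓ)) ((s : Fin t) × Fin (κ ℓ s)) ℂ)
    (ℓ : Fin m) (s : Fin t) (a : Fin (n ℓ))
    (ih : ∀ r : {r : Fin m // r ≠ ℓ}, Fin (κ r.1 s)) : ℂ :=
  ∑ j : ∀ r, Fin (n r),
    if j ℓ = a then (∏ r : {r : Fin m // r ≠ ℓ}, star (P r.1 (j r.1) ⟨s, ih r⟩)) * B j else 0

/-- The matrix `H_{ℓs}(P₁,…,Pₘ) ∈ ℂ^{n_ℓ×n_ℓ}` with `(a,b)`-entry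
`Σ_î B_{ℓ,s}(î[ℓ↦a])·conj(B_{ℓ,s}(î[ℓ↦b]))`, summed over multi-indices `î` with the
`ℓ`-th coordinate ignored. -/
noncomputable def Hmat {m t : ℕ} {n : Fin m → ℕ} {κ : Fin m → Fin t → ℕ}
    (B : (∀ ℓ, Fin (n ℓ)) → ℂ)
    (P : ∀ ℓ, Matrix (Fin (n ℓ)) ((s : Fin t) × Fin (κ ℓ s)) ℂ)
    (ℓ : Fin m) (s : Fin t) : Matrix (Fin (n ℓ)) (Fin (n ℓ)) ℂ :=
  Matrix.of fun a b =>
    ∑ ih : ∀ r : {r : Fin m // r ≠ ℓ}, Fin (κ r.1 s),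
      Bls B P ℓ s a ih * star (Bls B P ℓ s b ih)

/-- The partial Euclidean gradient `ℋ_ℓ(P₁,…,Pₘ) ∈ ℂ^{n_ℓ×k_ℓ}` of `fObj` with respect to
`P ℓ` (for the real inner product `⟨X,Y⟩ = Re tr(Yᴴ X)`): its `s`-th column block is
`2 · H_{ℓs}(P₁,…,Pₘ) · P_{ℓs}`. -/
noncomputable def scrH {m t : ℕ} {n : Fin m → ℕ} {κ : Fin m → Fin t → ℕ}
    (B : (∀ ℓ, Fin (n ℓ)) → ℂ)
    (P : ∀ ℓ, Matrix (Fin (n ℓ)) ((s : Fin t) × Fin (κ ℓ s)) ℂ)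
    (ℓ : Fin m) : Matrix (Fin (n ℓ)) ((s : Fin t) × Fin (κ ℓ s)) ℂ :=
  Matrix.of fun a sc => 2 * ∑ b, Hmat B P ℓ sc.1 a b * P ℓ b sc

theorem Complex.nonneg_of_forall_re_conj_mul_le {w : ℂ}
    (h : ∀ c : ℂ, ‖c‖ = 1 → (starRingEnd ℂ c * w).re ≤ w.re) : 0 ≤ w := by
  rcases eq_or_ne w 0 with rfl | hw
  · rfl
  have hnorm : (‖w‖ : ℂ) ≠ 0 := by exact_mod_cast norm_ne_zero_iff.mpr hw
  have hc : ‖w / ‖w‖‖ = 1 := by simp [hw]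
  have key : starRingEnd ℂ (w / ‖w‖) * w = ‖w‖ := by
    rw [map_div₀, Complex.conj_ofReal, div_mul_eq_mul_div, mul_comm, Complex.mul_conj,
      Complex.normSq_eq_norm_sq, div_eq_iff hnorm]
    push_cast; ring
  have := h _ hc
  rw [key, Complex.ofReal_re] at this
  exact Complex.re_eq_norm.mp (le_antisymm (Complex.re_le_norm w) this)

/- `(1 + a, b √ρ)` runs over the unit circle; the witness is its rational parametrisation
`((1 - s²ρ) / (1 + s²ρ), 2 s √ρ / (1 + s²ρ))` at a small `s > 0`. -/
theorem exists_two_mul_add_sq_add_sq_mul_eq_zero {ρ : ℝ} (hρ : 0 < ρ) (z : ℝ) :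
    ∃ a b : ℝ, 2 * a + a ^ 2 + b ^ 2 * ρ = 0 ∧ 0 < a * z + b * ρ := by
  set s := 1 / (|z| + 1)
  have hs : 0 < s := by positivity
  have hsz : s * z < 1 := by
    have : s * (|z| + 1) = 1 := one_div_mul_cancel (by positivity)
    nlinarith [le_abs_self z]
  have hd : 0 < 1 + s ^ 2 * ρ := by positivity
  refine ⟨-2 * s ^ 2 * ρ / (1 + s ^ 2 * ρ), 2 * s / (1 + s ^ 2 * ρ), ?_, ?_⟩
  · field_simp; ring
  · have : 0 < 2 * s * ρ * (1 - s * z) / (1 + s ^ 2 * ρ) :=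
      div_pos (mul_pos (by positivity) (by linarith)) hd
    convert this using 1; field_simp; ring

section Polar

variable {n k : Type*} [Fintype n] [Fintype k]

theorem Matrix.star_mulVec_dotProduct (Q : Matrix n k ℂ) (e : k → ℂ) (y : n → ℂ) :
    star (Q *ᵥ e) ⬝ᵥ y = star e ⬝ᵥ (Qᴴ *ᵥ y) := by
  rw [star_mulVec, dotProduct_mulVec]

theorem Matrix.star_dotProduct_mulVec_eq_zero {Q : Matrix n k ℂ} {v : n → ℂ}
    (hv : Qᴴ *ᵥ v = 0) (y : k → ℂ) : star v ⬝ᵥ (Q *ᵥ y) = 0 := by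
  rw [star_dotProduct, star_mulVec_dotProduct, hv, dotProduct_zero, star_zero]

theorem Matrix.PosSemidef.two_mul_re_dotProduct_mulVec_le {H : Matrix n n ℂ} (hH : H.PosSemidef)
    (u q : n → ℂ) :
    2 * (star u ⬝ᵥ (H *ᵥ q)).re ≤ (star u ⬝ᵥ (H *ᵥ u)).re + (star q ⬝ᵥ (H *ᵥ q)).re := by
  have h := hH.re_dotProduct_nonneg (u - q)
  have hsymm : star q ⬝ᵥ (H *ᵥ u) = star (star u ⬝ᵥ (H *ᵥ q)) := by
    rw [star_dotProduct, star_mulVec, ← dotProduct_mulVec, hH.1.eq]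
  simp only [star_sub, mulVec_sub, sub_dotProduct, dotProduct_sub, hsymm, RCLike.re_to_complex,
    Complex.sub_re, Complex.star_def, Complex.conj_re] at h
  linarith

theorem Matrix.re_star_dotProduct_mul_conjTranspose_mulVec (G : Matrix n k ℂ) (p : n → ℂ) :
    (star p ⬝ᵥ ((G * Gᴴ) *ᵥ p)).re = ∑ i, Complex.normSq ((star p ᵥ* G) i) := by
  rw [← mulVec_mulVec, dotProduct_mulVec, mulVec_conjTranspose, dotProduct, Complex.re_sum]
  refine Finset.sum_congr rfl fun i _ => ?_
  rw [Pi.star_apply, Complex.star_def, Complex.mul_conj, Complex.ofReal_re]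

theorem Matrix.trace_conjTranspose_add_vecMulVec_mul (A Q : Matrix n k ℂ) (w : n → ℂ)
    (e : k → ℂ) :
    ((Q + vecMulVec w (star e))ᴴ * A).trace = (Qᴴ * A).trace + star w ⬝ᵥ (A *ᵥ e) := by
  rw [conjTranspose_add, conjTranspose_vecMulVec, star_star, Matrix.add_mul, trace_add,
    vecMulVec_mul, trace_vecMulVec, dotProduct_comm, ← dotProduct_mulVec]

variable [DecidableEq k]

theorem Matrix.posSemidef_of_forall_dotProduct_mulVec_nonneg {A : Matrix k k ℂ}
    (h : ∀ x, 0 ≤ star x ⬝ᵥ (A *ᵥ x)) : A.PosSemidef := by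
  -- over `ℂ` the form being real already forces `A` to be Hermitian
  rw [← isPositive_toEuclideanLin_iff, LinearMap.isPositive_iff_complex]
  intro x
  have hx := h x
  rw [EuclideanSpace.inner_eq_star_dotProduct, ofLp_toLpLin, toLin'_apply, dotProduct_star,
    dotProduct_comm, (IsSelfAdjoint.of_nonneg hx).star_eq]
  exact ⟨Complex.ext rfl (Complex.nonneg_iff.mp hx).2, (Complex.nonneg_iff.mp hx).1⟩

theorem Matrix.conjTranspose_mul_self_of_isProjection {X : Matrix k k ℂ} (hX : Xᴴ = X)
    (hXX : X * X = X) {c : ℂ} (hc : ‖c‖ = 1) :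
    (1 + (c - 1) • X)ᴴ * (1 + (c - 1) • X) = 1 := by
  have hcc : starRingEnd ℂ c * c = 1 := by
    rw [mul_comm, Complex.mul_conj, Complex.normSq_eq_norm_sq, hc]; norm_num
  rw [conjTranspose_add, conjTranspose_smul, conjTranspose_one, hX, star_sub, star_one, add_mul,
    one_mul, mul_add, mul_one, smul_mul_smul_comm, hXX, add_assoc, ← add_smul, ← add_smul,
    add_eq_left, Complex.star_def]
  exact smul_eq_zero_of_left (by linear_combination hcc) X

theorem Matrix.trace_mul_nonneg_of_isProjection {Λ : Matrix k k ℂ}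
    (hΛ : ∀ W : Matrix k k ℂ, Wᴴ * W = 1 → (Wᴴ * Λ).trace.re ≤ Λ.trace.re)
    {X : Matrix k k ℂ} (hX : Xᴴ = X) (hXX : X * X = X) : 0 ≤ (X * Λ).trace := by
  refine Complex.nonneg_of_forall_re_conj_mul_le fun c hc => ?_
  have := hΛ _ (conjTranspose_mul_self_of_isProjection hX hXX hc)
  rw [conjTranspose_add, conjTranspose_smul, conjTranspose_one, hX, add_mul, one_mul,
    smul_mul, trace_add, trace_smul, smul_eq_mul, star_sub, star_one, Complex.star_def,
    sub_mul, one_mul, Complex.add_re, Complex.sub_re] at this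
  linarith

theorem Matrix.posSemidef_of_forall_re_trace_le {Λ : Matrix k k ℂ}
    (hΛ : ∀ W : Matrix k k ℂ, Wᴴ * W = 1 → (Wᴴ * Λ).trace.re ≤ Λ.trace.re) :
    Λ.PosSemidef := by
  refine posSemidef_of_forall_dotProduct_mulVec_nonneg fun x => ?_
  rcases eq_or_ne x 0 with rfl | hx
  · simp
  set r := star x ⬝ᵥ x
  have hr : 0 < r := dotProduct_star_self_pos_iff.mpr hx
  have hrr : star r = r := (IsSelfAdjoint.of_nonneg hr.le).star_eq
  have hproj := trace_mul_nonneg_of_isProjection hΛ (X := r⁻¹ • vecMulVec x (star x))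
    (by rw [conjTranspose_smul, conjTranspose_vecMulVec, star_star, star_inv₀, hrr])
    (by rw [smul_mul_smul_comm, vecMulVec_mul_vecMulVec, vecMulVec_smul, smul_smul,
          mul_assoc, inv_mul_cancel₀ hr.ne', mul_one])
  rw [smul_mul, trace_smul, vecMulVec_mul, trace_vecMulVec, dotProduct_comm, ← dotProduct_mulVec,
    smul_eq_mul] at hproj
  simpa [hr.ne'] using mul_nonneg hr.le hproj

theorem Matrix.conjTranspose_mul_self_add_vecMulVec {Q : Matrix n k ℂ} (hQ : Qᴴ * Q = 1)
    {w : n → ℂ} {e : k → ℂ} {a : ℝ} (hw : Qᴴ *ᵥ w = (a : ℂ) • e) :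
    (Q + vecMulVec w (star e))ᴴ * (Q + vecMulVec w (star e))
      = 1 + (2 * a + star w ⬝ᵥ w) • vecMulVec e (star e) := by
  have hw' : star w ᵥ* Q = (a : ℂ) • star e := by
    rw [← conjTranspose_conjTranspose Q, vecMul_conjTranspose, star_star, hw, star_smul,
      Complex.star_def, Complex.conj_ofReal]
  rw [conjTranspose_add, conjTranspose_vecMulVec, star_star, Matrix.add_mul, Matrix.mul_add,
    Matrix.mul_add, hQ, mul_vecMulVec, hw, vecMulVec_mul, hw', vecMulVec_mul_vecMulVec,
    smul_vecMulVec, vecMulVec_smul, vecMulVec_smul, add_assoc, ← add_smul, ← add_smul]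
  ring_nf

theorem Matrix.conjTranspose_mul_self_add_vecMulVec_smul_add_smul {Q : Matrix n k ℂ}
    (hQ : Qᴴ * Q = 1) {e : k → ℂ} (he : star e ⬝ᵥ e = 1) {v : n → ℂ} (hv : Qᴴ *ᵥ v = 0)
    {ρ a b : ℝ} (hρ : star v ⬝ᵥ v = ρ) (hab : 2 * a + a ^ 2 + b ^ 2 * ρ = 0) :
    (Q + vecMulVec ((a : ℂ) • (Q *ᵥ e) + (b : ℂ) • v) (star e))ᴴ
      * (Q + vecMulVec ((a : ℂ) • (Q *ᵥ e) + (b : ℂ) • v) (star e)) = 1 := by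
  have hw : Qᴴ *ᵥ ((a : ℂ) • (Q *ᵥ e) + (b : ℂ) • v) = (a : ℂ) • e := by
    rw [mulVec_add, mulVec_smul, mulVec_smul, mulVec_mulVec, hQ, one_mulVec, hv, smul_zero,
      add_zero]
  have hqq : star (Q *ᵥ e) ⬝ᵥ (Q *ᵥ e) = 1 := by
    rw [star_mulVec_dotProduct, mulVec_mulVec, hQ, one_mulVec, he]
  have hqv : star (Q *ᵥ e) ⬝ᵥ v = 0 := by rw [star_mulVec_dotProduct, hv, dotProduct_zero]
  rw [conjTranspose_mul_self_add_vecMulVec hQ hw, add_eq_left]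
  refine smul_eq_zero_of_left ?_ _
  simp only [star_add, star_smul, add_dotProduct, dotProduct_add, smul_dotProduct,
    dotProduct_smul, hqq, hqv, star_dotProduct_mulVec_eq_zero hv, hρ, Complex.star_def,
    Complex.conj_ofReal, smul_eq_mul]
  have hab' := congrArg Complex.ofReal hab
  push_cast at hab'
  linear_combination hab'

theorem Matrix.eq_mul_conjTranspose_mul_of_forall_re_trace_le {A Q : Matrix n k ℂ}
    (hQ : Qᴴ * Q = 1)
    (hmax : ∀ U : Matrix n k ℂ, Uᴴ * U = 1 → (Uᴴ * A).trace.re ≤ (Qᴴ * A).trace.re) :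
    A = Q * (Qᴴ * A) := by
  set M := A - Q * (Qᴴ * A)
  have hQM : Qᴴ * M = 0 := by
    rw [Matrix.mul_sub, ← Matrix.mul_assoc, hQ, Matrix.one_mul, sub_self]
  by_contra hne
  obtain ⟨j, hj⟩ : ∃ j, M.col j ≠ 0 := by
    by_contra! h
    exact hne (sub_eq_zero.mp (ext_col h))
  set e : k → ℂ := Pi.single j 1
  set v := M *ᵥ e
  have hv : Qᴴ *ᵥ v = 0 := by rw [mulVec_mulVec, hQM, zero_mulVec]
  have hv0 : v ≠ 0 := by rwa [show v = M.col j from mulVec_single_one M j]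
  obtain ⟨ρ, hρ, hρv⟩ := RCLike.pos_iff_exists_ofReal.mp (dotProduct_star_self_pos_iff.mpr hv0)
  have hvv : star v ⬝ᵥ v = (ρ : ℂ) := hρv.symm
  set z := star e ⬝ᵥ ((Qᴴ * A) *ᵥ e)
  obtain ⟨a, b, hab, hgain⟩ := exists_two_mul_add_sq_add_sq_mul_eq_zero hρ z.re
  -- the column `j` of `Q` is turned towards `v`, which is orthogonal to the range of `Q`
  have he : star e ⬝ᵥ e = 1 := by simp [e]
  have hU := conjTranspose_mul_self_add_vecMulVec_smul_add_smul hQ he hv hvv hab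
  have hAe : star ((a : ℂ) • (Q *ᵥ e) + (b : ℂ) • v) ⬝ᵥ (A *ᵥ e) = a * z + b * ρ := by
    have hA : A *ᵥ e = v + Q *ᵥ ((Qᴴ * A) *ᵥ e) := by
      rw [mulVec_mulVec, ← add_mulVec, sub_add_cancel]
    have hqA : star (Q *ᵥ e) ⬝ᵥ (A *ᵥ e) = z := by rw [star_mulVec_dotProduct, mulVec_mulVec]
    have hvA : star v ⬝ᵥ (A *ᵥ e) = ρ := by
      rw [hA, dotProduct_add, star_dotProduct_mulVec_eq_zero hv, add_zero, hvv]
    simp only [star_add, star_smul, add_dotProduct, smul_dotProduct, hqA, hvA,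
      Complex.star_def, Complex.conj_ofReal, smul_eq_mul]
  have := hmax _ hU
  rw [trace_conjTranspose_add_vecMulVec_mul, Complex.add_re, hAe, Complex.add_re,
    Complex.re_ofReal_mul, ← Complex.ofReal_mul, Complex.ofReal_re] at this
  linarith

theorem Matrix.polar_of_forall_re_trace_le {A Q : Matrix n k ℂ} (hQ : Qᴴ * Q = 1)
    (hmax : ∀ U : Matrix n k ℂ, Uᴴ * U = 1 → (Uᴴ * A).trace.re ≤ (Qᴴ * A).trace.re) :
    A = Q * (Qᴴ * A) ∧ (Qᴴ * A).PosSemidef := by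
  refine ⟨eq_mul_conjTranspose_mul_of_forall_re_trace_le hQ hmax,
    posSemidef_of_forall_re_trace_le fun W hW => ?_⟩
  have := hmax (Q * W) (by
    rw [conjTranspose_mul, Matrix.mul_assoc, ← Matrix.mul_assoc Qᴴ, hQ, Matrix.one_mul, hW])
  rwa [conjTranspose_mul, Matrix.mul_assoc] at this

end Polar

theorem Fintype.sum_ite_exists_forall_fst_eq {ι T M : Type*} [Fintype ι] [DecidableEq ι]
    [Nonempty ι] [Fintype T] [DecidableEq T] {α : ι → T → Type*} [∀ i s, Fintype (α i s)]
    [AddCommMonoid M] [DecidablePred fun x : ∀ i, Σ s, α i s => ∃ s, ∀ i, (x i).1 = s]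
    (g : (∀ i, Σ s, α i s) → M) :
    ∑ x, (if ∃ s, ∀ i, (x i).1 = s then g x else 0)
      = ∑ s, ∑ c : ∀ i, α i s, g fun i => ⟨s, c i⟩ := by
  obtain ⟨i₀⟩ := ‹Nonempty ι›
  rw [← Finset.sum_filter,
    ← Fintype.sum_sigma' (α := fun s => ∀ i, α i s) fun s c => g fun i => ⟨s, c i⟩]
  symm
  refine Finset.sum_bij (fun p _ i => ⟨p.1, p.2 i⟩) (fun p _ => ?_) (fun p _ q _ h => ?_)
    (fun x hx => ?_) (fun _ _ => rfl)
  · simp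
  · obtain ⟨s, c⟩ := p
    obtain ⟨s', c'⟩ := q
    obtain rfl : s = s' := congrArg Sigma.fst (congrFun h i₀)
    congr 1
    funext i
    exact eq_of_heq (Sigma.mk.inj_iff.mp (congrFun h i)).2
  · obtain ⟨s, hs⟩ := (Finset.mem_filter.mp hx).2
    refine ⟨⟨s, fun i => cast (congrArg (α i) (hs i)) (x i).2⟩, Finset.mem_univ _, ?_⟩
    funext i
    exact Sigma.ext (hs i).symm (cast_heq _ _)

section Tensor

variable {m t : ℕ} {n : Fin m → ℕ} {κ : Fin m → Fin t → ℕ} (B : (∀ ℓ, Fin (n ℓ)) → ℂ)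
  (P : ∀ ℓ, Matrix (Fin (n ℓ)) ((s : Fin t) × Fin (κ ℓ s)) ℂ)

noncomputable def blsUnfolding (ℓ : Fin m) (s : Fin t) :
    Matrix (Fin (n ℓ)) (∀ r : {r : Fin m // r ≠ ℓ}, Fin (κ r.1 s)) ℂ :=
  Matrix.of (Bls B P ℓ s)

theorem Hmat_eq_mul_conjTranspose (ℓ : Fin m) (s : Fin t) :
    Hmat B P ℓ s = blsUnfolding B P ℓ s * (blsUnfolding B P ℓ s)ᴴ := by
  ext a b
  simp [Hmat, blsUnfolding, mul_apply]

theorem posSemidef_Hmat (ℓ : Fin m) (s : Fin t) : (Hmat B P ℓ s).PosSemidef := by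
  rw [Hmat_eq_mul_conjTranspose]
  exact posSemidef_self_mul_conjTranspose _

theorem Hmat_update (ℓ : Fin m) (U : Matrix (Fin (n ℓ)) ((s : Fin t) × Fin (κ ℓ s)) ℂ)
    (s : Fin t) : Hmat B (Function.update P ℓ U) ℓ s = Hmat B P ℓ s := by
  have hBls : Bls B (Function.update P ℓ U) ℓ s = Bls B P ℓ s := by
    funext a ih
    refine Finset.sum_congr rfl fun j _ => ?_
    rw [Finset.prod_congr rfl fun r _ => by rw [Function.update_of_ne r.2]]
  simp only [Hmat, hBls]

theorem multiProd_eq_vecMul_blsUnfolding (ℓ : Fin m) (s : Fin t) (c : ∀ r, Fin (κ r s)) :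
    multiProd B P (fun r => ⟨s, c r⟩)
      = (star ((P ℓ).col ⟨s, c ℓ⟩) ᵥ* blsUnfolding B P ℓ s) fun r => c r.1 := by
  simp only [multiProd, vecMul, dotProduct, blsUnfolding, Bls, of_apply, Finset.mul_sum, mul_ite,
    mul_zero]
  rw [Finset.sum_comm]
  simp only [Finset.sum_ite_eq, Finset.mem_univ, if_true]
  refine Finset.sum_congr rfl fun j _ => ?_
  rw [Fintype.prod_eq_mul_prod_subtype_ne _ ℓ]
  simp [mul_assoc]

theorem fObj_eq_sum_re_dotProduct_Hmat (ℓ : Fin m) :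
    fObj B P = ∑ sc, (star ((P ℓ).col sc) ⬝ᵥ (Hmat B P ℓ sc.1 *ᵥ (P ℓ).col sc)).re := by
  have : Nonempty (Fin m) := ⟨ℓ⟩
  have hsplit (s : Fin t) : ∑ c : ∀ r, Fin (κ r s), Complex.normSq (multiProd B P fun r => ⟨s, c r⟩)
      = ∑ cl, ∑ ih, Complex.normSq ((star ((P ℓ).col ⟨s, cl⟩) ᵥ* blsUnfolding B P ℓ s) ih) := by
    rw [← Fintype.sum_prod_type']
    refine Fintype.sum_equiv (Equiv.piSplitAt ℓ fun r => Fin (κ r s)) _ _ fun c => ?_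
    rw [multiProd_eq_vecMul_blsUnfolding B P ℓ]
    rfl
  unfold fObj
  rw [Fintype.sum_ite_exists_forall_fst_eq, Fintype.sum_sigma]
  refine Finset.sum_congr rfl fun s _ => ?_
  rw [hsplit]
  refine Finset.sum_congr rfl fun cl _ => ?_
  rw [Hmat_eq_mul_conjTranspose, re_star_dotProduct_mul_conjTranspose_mulVec]

theorem re_trace_conjTranspose_mul_scrH (ℓ : Fin m)
    (U : Matrix (Fin (n ℓ)) ((s : Fin t) × Fin (κ ℓ s)) ℂ) :
    (Uᴴ * scrH B P ℓ).trace.re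
      = 2 * ∑ sc, (star (U.col sc) ⬝ᵥ (Hmat B P ℓ sc.1 *ᵥ (P ℓ).col sc)).re := by
  have htrace : (Uᴴ * scrH B P ℓ).trace
      = 2 * ∑ sc, star (U.col sc) ⬝ᵥ (Hmat B P ℓ sc.1 *ᵥ (P ℓ).col sc) := by
    simp only [trace, diag, mul_apply, conjTranspose_apply, scrH, of_apply, dotProduct, mulVec,
      col_apply, Pi.star_apply, Finset.mul_sum]
    refine Finset.sum_congr rfl fun sc _ => Finset.sum_congr rfl fun a _ =>
      Finset.sum_congr rfl fun b _ => by ring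
  simp only [htrace, Complex.mul_re, Complex.re_ofNat, Complex.im_ofNat, zero_mul, sub_zero,
    Complex.re_sum]

theorem re_trace_conjTranspose_mul_scrH_le (ℓ : Fin m)
    (U : Matrix (Fin (n ℓ)) ((s : Fin t) × Fin (κ ℓ s)) ℂ) :
    (Uᴴ * scrH B P ℓ).trace.re ≤ fObj B (Function.update P ℓ U) + fObj B P := by
  rw [re_trace_conjTranspose_mul_scrH, fObj_eq_sum_re_dotProduct_Hmat _ _ ℓ,
    fObj_eq_sum_re_dotProduct_Hmat B P ℓ, ← Finset.sum_add_distrib, Finset.mul_sum]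
  refine Finset.sum_le_sum fun sc _ => ?_
  rw [Function.update_self, Hmat_update]
  exact (posSemidef_Hmat B P ℓ sc.1).two_mul_re_dotProduct_mulVec_le _ _

theorem re_trace_conjTranspose_mul_scrH_self (ℓ : Fin m) :
    ((P ℓ)ᴴ * scrH B P ℓ).trace.re = 2 * fObj B P := by
  rw [re_trace_conjTranspose_mul_scrH, fObj_eq_sum_re_dotProduct_Hmat B P ℓ]

end Tensor

theorem stmt_8_general (m t : ℕ)
    (n : Fin m → ℕ)
    (κ : Fin m → Fin t → ℕ)
    (B : (∀ ℓ, Fin (n ℓ)) → ℂ)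
    (Pstar : ∀ ℓ, Matrix (Fin (n ℓ)) ((s : Fin t) × Fin (κ ℓ s)) ℂ)
    (horth : ∀ ℓ, (Pstar ℓ)ᴴ * Pstar ℓ = 1)
    (hmax : ∀ P : ∀ ℓ, Matrix (Fin (n ℓ)) ((s : Fin t) × Fin (κ ℓ s)) ℂ,
      (∀ ℓ, (P ℓ)ᴴ * P ℓ = 1) → fObj B P ≤ fObj B Pstar) :
    ∀ ℓ : Fin m,
      scrH B Pstar ℓ = Pstar ℓ * ((Pstar ℓ)ᴴ * scrH B Pstar ℓ) ∧
      ((Pstar ℓ)ᴴ * scrH B Pstar ℓ).PosSemidef := by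
  intro ℓ
  refine polar_of_forall_re_trace_le (horth ℓ) fun U hU => ?_
  have hUorth : ∀ r, (Function.update Pstar ℓ U r)ᴴ * Function.update Pstar ℓ U r = 1 :=
    (Function.forall_update_iff Pstar fun _ M => Mᴴ * M = 1).mpr ⟨hU, fun r _ => horth r⟩
  linarith [hmax _ hUorth, re_trace_conjTranspose_mul_scrH_le B Pstar ℓ U,
    re_trace_conjTranspose_mul_scrH_self B Pstar ℓ]

/-- Theorem 3.2, KKT condition at a global maximizer: at a global maximizer
over tuples of orthonormal matrices, each `ℋ_ℓ` admits `P_{*ℓ}` as orthonormal polar factor: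
`ℋ_ℓ(P_*) = P_{*ℓ} Λ_{*ℓ}` with `Λ_{*ℓ} = P_{*ℓ}ᴴ ℋ_ℓ(P_*)` Hermitian positive semidefinite. -/
theorem stmt_8 (m t : ℕ) (hm : 1 ≤ m) (ht : 1 ≤ t)
    (n : Fin m → ℕ) (hn : ∀ ℓ, 1 ≤ n ℓ)
    (κ : Fin m → Fin t → ℕ) (hκ : ∀ ℓ s, 1 ≤ κ ℓ s)
    (hkn : ∀ ℓ, (∑ s, κ ℓ s) ≤ n ℓ)
    (B : (∀ ℓ, Fin (n ℓ)) → ℂ)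
    (Pstar : ∀ ℓ, Matrix (Fin (n ℓ)) ((s : Fin t) × Fin (κ ℓ s)) ℂ)
    (horth : ∀ ℓ, (Pstar ℓ)ᴴ * Pstar ℓ = 1)
    (hmax : ∀ P : ∀ ℓ, Matrix (Fin (n ℓ)) ((s : Fin t) × Fin (κ ℓ s)) ℂ,
      (∀ ℓ, (P ℓ)ᴴ * P ℓ = 1) → fObj B P ≤ fObj B Pstar) :
    ∀ ℓ : Fin m,
      scrH B Pstar ℓ = Pstar ℓ * ((Pstar ℓ)ᴴ * scrH B Pstar ℓ) ∧
      ((Pstar ℓ)ᴴ * scrH B Pstar ℓ).PosSemidef :=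
  stmt_8_general m t n κ B Pstar horth hmax
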